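/- Let N ≥ 1 and η ∈ ℂ∖{0} with η not a root of unity. Let Q₀ = 1 and, for 1 ≤ j ≤ N, let Q_j ∈ ℂ[u] be a monic polynomial of degree j all of whose roots are simple and nonzero; write μ₁, …, μ_N for the roots of Q_N. Assume the genericity condition that for every 1 ≤ j ≤ N, no root of Q_j equals η·σ' or η⁻¹·σ' for a root σ' of Q_{j−1}. Suppose the Bethe equations hold: for every 1 ≤ j ≤ N−1 and every root σ of Q_j, τ_j·Q_{j−1}(ησ)·Q_j(η⁻²σ)·Q_{j+1}(ησ) + τ_{j+1}·Q_{j−1}(η⁻¹σ)·Q_j(η²σ)·Q_{j+1}(η⁻¹σ) = 0, where τ₁, …, τ_N ∈ ℂ. Then Σ_{α=1}^{N} [ ∏_{β≠α} (η⁻¹μ_α − ημ_β)/(μ_α − μ_β) ] · τ_N · η^{1−N} · Q_{N−1}(ημ_α)/Q_{N−1}(η⁻¹μ_α) = τ₁ + τ₂ + ⋯ + τ_N. -/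

import Mathlib

/-!
Write `H_j` for the left-hand side at level `j` (masses the roots of `Q_j`, momenta from `Q_{j-1}`,
coupling `τ_j`); then `H_0 = 0` and we show `H_{j+1} = H_j + τ_{j+1}`. Let `A`, `B` be the root
sets of `Q_{j+1}`, `Q_j`. The residues of `f(z) = Q_{j+1}(η⁻²z) Q_j(ηz) / (z Q_{j+1}(z) Q_j(η⁻¹z))`
at its simple poles `0`, `A` and `ηB` add up to `η⁻²`, minus its residue at infinity
(`Lagrange.leadingCoeff_eq_sum`). The residue at `0` is `1`; `τ_{j+1}` times the residue at
`σ ∈ A` is `η⁻²(1 - η²)` times the `σ`-term of `H_{j+1}`, and, by the Bethe equation at `σ`,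
`τ_{j+1}` times the residue at `ησ`, `σ ∈ B`, is `-η⁻²(1 - η²)` times the `σ`-term of `H_j`.
Since `η² ≠ 1`, the step follows.
-/

open Polynomial Finset Lagrange

variable {K : Type*} [Field K]

theorem eval_nodal_const_mul {c : K} (hc : c ≠ 0) (s : Finset K) (x : K) :
    (nodal s (c * ·)).eval x = c ^ #s * (nodal s id).eval (c⁻¹ * x) := by
  rw [eval_nodal, eval_nodal, pow_card_mul_prod]
  refine prod_congr rfl fun _ _ => ?_
  field_simp
  simp

theorem prod_sub_eq_eval_nodal (s : Finset K) (x : K) :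
    ∏ k ∈ s, (x - k) = (nodal s id).eval x :=
  eval_nodal.symm

section Nodal

variable [DecidableEq K]

theorem nodal_roots_toFinset {p : K[X]} (hm : p.Monic) (hcard : p.roots.card = p.natDegree)
    (hnodup : p.roots.Nodup) : nodal p.roots.toFinset id = p := by
  rw [nodal, Finset.prod, Multiset.toFinset_val, hnodup.dedup]
  exact prod_multiset_X_sub_C_of_monic_of_roots_card_eq hm hcard

theorem prod_sub_image_const_mul {c : K} (hc : c ≠ 0) (s : Finset K) (x : K) :
    ∏ k ∈ s.image (c * ·), (x - k) = c ^ #s * (nodal s id).eval (c⁻¹ * x) := by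
  rw [prod_image fun a _ b _ h => mul_left_cancel₀ hc h, ← eval_nodal_const_mul hc, eval_nodal]

theorem prod_erase_union_sub {s t : Finset K} {r : K} (hr : r ∈ s) (hst : Disjoint s t) :
    ∏ k ∈ (s ∪ t).erase r, (r - k) = (∏ k ∈ s.erase r, (r - k)) * ∏ k ∈ t, (r - k) := by
  rw [erase_union_distrib, erase_eq_of_notMem (disjoint_left.mp hst hr),
    prod_union (disjoint_of_subset_left (erase_subset r s) hst)]

theorem prod_erase_sub_ne_zero (s : Finset K) (σ : K) : ∏ σ' ∈ s.erase σ, (σ - σ') ≠ 0 :=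
  prod_ne_zero_iff.mpr fun _ h => sub_ne_zero.mpr (ne_of_mem_erase h).symm

end Nodal

namespace RuijsenaarsSchneider

variable [DecidableEq K]

def weight (η : K) (s : Finset K) (σ : K) : K :=
  ∏ σ' ∈ s.erase σ, (η⁻¹ * σ - η * σ') / (σ - σ')

/-- `H_j = hamiltonian η τ_j (roots of Q_j) Q_{j-1}`. -/
noncomputable def hamiltonian (η τ : K) (s : Finset K) (q : K[X]) : K :=
  ∑ σ ∈ s, weight η s σ * (τ * η ^ ((1 : ℤ) - (#s : ℤ)) * (q.eval (η * σ) / q.eval (η⁻¹ * σ)))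

theorem weight_mul_prod_erase_sub {η σ : K} {s : Finset K} (hη : η ≠ 0) (hσ : σ ∈ s) :
    (1 - η ^ 2) * σ * weight η s σ * ∏ σ' ∈ s.erase σ, (σ - σ') =
      η ^ (#s + 1) * (nodal s id).eval ((η ^ 2)⁻¹ * σ) := by
  have hσ' : (1 - η ^ 2) * σ = η * (η⁻¹ * σ - η * σ) := by field_simp
  rw [weight, prod_div_distrib, mul_assoc, div_mul_cancel₀ _ (prod_erase_sub_ne_zero s σ), hσ',
    mul_assoc, mul_prod_erase s (fun σ' => η⁻¹ * σ - η * σ') hσ, eval_nodal, pow_succ',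
    mul_assoc, pow_card_mul_prod]
  congr 1
  refine prod_congr rfl fun _ _ => ?_
  field_simp
  simp

section Residues

variable {η : K} {A B : Finset K}

def poles (η : K) (A B : Finset K) : Finset K :=
  insert 0 (A ∪ B.image (η * ·))

/-- `η²` times the residue of `f` at `r`, for `A`, `B` the root sets of `Q_{j+1}`, `Q_j`. -/
noncomputable def residue (η : K) (A B : Finset K) (r : K) : K :=
  (nodal A (η ^ 2 * ·) * nodal B (η⁻¹ * ·)).eval r / ∏ k ∈ (poles η A B).erase r, (r - k)

theorem zero_notMem_union_image (hη : η ≠ 0) (hA0 : 0 ∉ A) (hB0 : 0 ∉ B) :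
    (0 : K) ∉ A ∪ B.image (η * ·) := by
  simp only [mem_union, mem_image, mul_eq_zero, not_or, not_exists, not_and]
  exact ⟨hA0, fun b hb => ⟨hη, fun h => hB0 (h ▸ hb)⟩⟩

theorem sum_residue (hη : η ≠ 0) (hA0 : 0 ∉ A) (hB0 : 0 ∉ B)
    (hAB : Disjoint A (B.image (η * ·))) : ∑ r ∈ poles η A B, residue η A B r = 1 := by
  have hM : (nodal A (η ^ 2 * ·) * nodal B (η⁻¹ * ·)).Monic := nodal_monic.mul nodal_monic
  have hpoles : (#(poles η A B) : WithBot ℕ) =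
      (nodal A (η ^ 2 * ·) * nodal B (η⁻¹ * ·)).degree + 1 := by
    rw [degree_eq_natDegree hM.ne_zero, natDegree_mul nodal_ne_zero nodal_ne_zero,
      natDegree_nodal, natDegree_nodal, poles,
      card_insert_of_notMem (zero_notMem_union_image hη hA0 hB0), card_union_of_disjoint hAB,
      card_image_of_injective _ (mul_right_injective₀ hη)]
    rfl
  rw [← hM.leadingCoeff, leadingCoeff_eq_sum (Set.injOn_id _) hpoles]
  rfl

theorem residue_zero (hη : η ≠ 0) (hA0 : 0 ∉ A) (hB0 : 0 ∉ B) (hcard : #A = #B + 1)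
    (hAB : Disjoint A (B.image (η * ·))) : residue η A B 0 = η ^ 2 := by
  have ha : (nodal A id).eval 0 ≠ 0 := eval_nodal_not_at_node fun a ha h => hA0 (h ▸ ha)
  have hb : (nodal B id).eval 0 ≠ 0 := eval_nodal_not_at_node fun b hb h => hB0 (h ▸ hb)
  rw [residue, poles, erase_insert (zero_notMem_union_image hη hA0 hB0), prod_union hAB,
    prod_sub_image_const_mul hη, eval_mul, eval_nodal_const_mul (pow_ne_zero 2 hη),
    eval_nodal_const_mul (inv_ne_zero hη), prod_sub_eq_eval_nodal, mul_zero, mul_zero, mul_zero,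
    hcard, inv_pow]
  field_simp
  ring

theorem mul_residue_of_mem (τ : K) {σ : K} (hσ : σ ∈ A) (hη : η ≠ 0) (hA0 : 0 ∉ A)
    (hB0 : 0 ∉ B) (hcard : #A = #B + 1) (hAB : Disjoint A (B.image (η * ·))) :
    τ * residue η A B σ = (1 - η ^ 2) * (weight η A σ * (τ * η ^ ((1 : ℤ) - (#A : ℤ)) *
      ((nodal B id).eval (η * σ) / (nodal B id).eval (η⁻¹ * σ)))) := by
  have hσ0 : σ ≠ 0 := fun h => hA0 (h ▸ hσ)
  have h0 : (0 : K) ∉ (A ∪ B.image (η * ·)).erase σ := fun h =>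
    zero_notMem_union_image hη hA0 hB0 (mem_of_mem_erase h)
  have hb : (nodal B id).eval (η⁻¹ * σ) ≠ 0 := eval_nodal_not_at_node fun b hb h =>
    disjoint_left.mp hAB hσ
      (mem_image.mpr ⟨b, hb, by rw [← id_eq b, ← h, mul_inv_cancel_left₀ hη]⟩)
  have hw := weight_mul_prod_erase_sub hη hσ
  have hD := prod_erase_sub_ne_zero A σ
  rw [residue, poles, erase_insert_of_ne (Ne.symm hσ0), prod_insert h0,
    prod_erase_union_sub hσ hAB, prod_sub_image_const_mul hη, eval_mul,
    eval_nodal_const_mul (pow_ne_zero 2 hη), eval_nodal_const_mul (inv_ne_zero hη), inv_inv,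
    zpow_one_sub_natCast₀ hη, hcard, sub_zero, inv_pow]
  rw [hcard] at hw
  generalize (nodal A id).eval ((η ^ 2)⁻¹ * σ) = a at hw ⊢
  generalize (nodal B id).eval (η * σ) = b₁
  generalize (nodal B id).eval (η⁻¹ * σ) = b₂ at hb ⊢
  field_simp
  linear_combination (-(τ * b₁ * η ^ (2 * #B + 1))) * hw

theorem mul_residue_mul_of_mem {q : K[X]} (τ₁ τ₂ : K) {σ : K} (hσ : σ ∈ B) (hη : η ≠ 0)
    (hA0 : 0 ∉ A) (hB0 : 0 ∉ B) (hcard : #A = #B + 1) (hAB : Disjoint A (B.image (η * ·)))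
    (hq : q.eval (η⁻¹ * σ) ≠ 0)
    (hbethe : τ₁ * q.eval (η * σ) * (nodal B id).eval ((η ^ 2)⁻¹ * σ) *
        (nodal A id).eval (η * σ) +
      τ₂ * q.eval (η⁻¹ * σ) * (nodal B id).eval (η ^ 2 * σ) * (nodal A id).eval (η⁻¹ * σ) = 0) :
    τ₂ * residue η A B (η * σ) = -((1 - η ^ 2) * (weight η B σ *
      (τ₁ * η ^ ((1 : ℤ) - (#B : ℤ)) * (q.eval (η * σ) / q.eval (η⁻¹ * σ))))) := by
  have hσ0 : σ ≠ 0 := fun h => hB0 (h ▸ hσ)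
  have hησ : η * σ ∈ B.image (η * ·) := mem_image_of_mem _ hσ
  have h0 : (0 : K) ∉ (B.image (η * ·) ∪ A).erase (η * σ) := fun h =>
    zero_notMem_union_image hη hA0 hB0 (union_comm A _ ▸ mem_of_mem_erase h)
  have ha : (nodal A id).eval (η * σ) ≠ 0 := eval_nodal_not_at_node fun a ha h =>
    disjoint_left.mp hAB ha (by rwa [← id_eq a, ← h])
  have hw := weight_mul_prod_erase_sub hη hσ
  have hD := prod_erase_sub_ne_zero B σ
  have harg₁ : (η ^ 2)⁻¹ * (η * σ) = η⁻¹ * σ := by field_simp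
  have harg₂ : η⁻¹⁻¹ * (η * σ) = η ^ 2 * σ := by rw [inv_inv]; ring
  rw [residue, poles, erase_insert_of_ne (mul_ne_zero hη hσ0).symm, union_comm, prod_insert h0,
    prod_erase_union_sub hησ hAB.symm, ← image_erase (mul_right_injective₀ hη),
    prod_sub_image_const_mul hη, inv_mul_cancel_left₀ hη, eval_mul,
    eval_nodal_const_mul (pow_ne_zero 2 hη), eval_nodal_const_mul (inv_ne_zero hη), harg₁, harg₂,
    prod_sub_eq_eval_nodal A (η * σ), zpow_one_sub_natCast₀ hη, hcard,
    ← card_erase_add_one hσ, sub_zero, inv_pow]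
  rw [← card_erase_add_one hσ, prod_sub_eq_eval_nodal] at hw
  rw [prod_sub_eq_eval_nodal] at hD
  generalize (nodal A id).eval (η * σ) = a₁ at ha hbethe ⊢
  generalize (nodal A id).eval (η⁻¹ * σ) = a₂ at hbethe ⊢
  generalize (nodal B id).eval ((η ^ 2)⁻¹ * σ) = b₁ at hw hbethe ⊢
  generalize (nodal B id).eval (η ^ 2 * σ) = b₂ at hbethe ⊢
  generalize q.eval (η * σ) = c₁ at hbethe ⊢
  generalize q.eval (η⁻¹ * σ) = c₂ at hq hbethe ⊢
  generalize (nodal (B.erase σ) id).eval σ = d at hD hw ⊢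
  generalize #(B.erase σ) = n at hw ⊢
  field_simp
  linear_combination η ^ (2 * n + 4) * hbethe + η ^ (n + 2) * a₁ * τ₁ * c₁ * hw

end Residues

theorem hamiltonian_succ {η τ₁ τ₂ : K} {A B : Finset K} {q : K[X]} (hη : η ≠ 0)
    (hη2 : η ^ 2 ≠ 1) (hA0 : 0 ∉ A) (hB0 : 0 ∉ B) (hcard : #A = #B + 1)
    (hA : ∀ σ ∈ A, (nodal B id).eval (η⁻¹ * σ) ≠ 0) (hB : ∀ σ ∈ B, q.eval (η⁻¹ * σ) ≠ 0)
    (hbethe : ∀ σ ∈ B, τ₁ * q.eval (η * σ) * (nodal B id).eval ((η ^ 2)⁻¹ * σ) *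
        (nodal A id).eval (η * σ) +
      τ₂ * q.eval (η⁻¹ * σ) * (nodal B id).eval (η ^ 2 * σ) * (nodal A id).eval (η⁻¹ * σ) = 0) :
    hamiltonian η τ₂ A (nodal B id) = hamiltonian η τ₁ B q + τ₂ := by
  have hAB : Disjoint A (B.image (η * ·)) := disjoint_left.mpr fun σ hσ hσB => by
    obtain ⟨b, hb, rfl⟩ := mem_image.mp hσB
    exact hA _ hσ (by rw [inv_mul_cancel_left₀ hη]; exact eval_nodal_at_node (v := id) hb)
  have hres := congrArg (τ₂ * ·) (sum_residue hη hA0 hB0 hAB)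
  simp only [mul_one] at hres
  rw [poles, sum_insert (zero_notMem_union_image hη hA0 hB0), sum_union hAB,
    sum_image fun _ _ _ _ h => mul_left_cancel₀ hη h, mul_add, mul_add, mul_sum, mul_sum,
    residue_zero hη hA0 hB0 hcard hAB,
    sum_congr rfl fun σ hσ => mul_residue_of_mem τ₂ hσ hη hA0 hB0 hcard hAB,
    sum_congr rfl fun σ hσ => mul_residue_mul_of_mem τ₁ τ₂ hσ hη hA0 hB0 hcard hAB (hB σ hσ)
      (hbethe σ hσ), sum_neg_distrib, ← mul_sum, ← mul_sum] at hres
  refine mul_left_cancel₀ (sub_ne_zero.mpr hη2.symm) ?_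
  rw [hamiltonian, hamiltonian]
  linear_combination hres

theorem hamiltonian_eq_sum_range {η : K} (hη : η ≠ 0) (hη2 : η ^ 2 ≠ 1) (R : ℕ → Finset K)
    (τ : ℕ → K) (N : ℕ) (hcard : ∀ j ≤ N, #(R j) = j) (hzero : ∀ j ≤ N, 0 ∉ R j)
    (hshift : ∀ j ≤ N, ∀ σ ∈ R j, (nodal (R (j - 1)) id).eval (η⁻¹ * σ) ≠ 0)
    (hbethe : ∀ j, 1 ≤ j → j + 1 ≤ N → ∀ σ ∈ R j,
      τ (j - 1) * (nodal (R (j - 1)) id).eval (η * σ) * (nodal (R j) id).eval ((η ^ 2)⁻¹ * σ) *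
          (nodal (R (j + 1)) id).eval (η * σ) +
        τ j * (nodal (R (j - 1)) id).eval (η⁻¹ * σ) * (nodal (R j) id).eval (η ^ 2 * σ) *
          (nodal (R (j + 1)) id).eval (η⁻¹ * σ) = 0) :
    hamiltonian η (τ (N - 1)) (R N) (nodal (R (N - 1)) id) = ∑ i ∈ range N, τ i := by
  have hR0 : R 0 = ∅ := card_eq_zero.mp (hcard 0 (Nat.zero_le N))
  induction N with
  | zero => simp [hamiltonian, hR0]
  | succ n ih =>
    rw [sum_range_succ, ← ih (fun j hj => hcard j (by omega)) (fun j hj => hzero j (by omega))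
      (fun j hj => hshift j (by omega)) (fun j h1 h2 => hbethe j h1 (by omega)),
      Nat.add_sub_cancel]
    have hshift' := hshift (n + 1) le_rfl
    rw [Nat.add_sub_cancel] at hshift'
    refine hamiltonian_succ hη hη2 (hzero _ le_rfl) (hzero n (by omega))
      (by rw [hcard _ le_rfl, hcard n (by omega)]) hshift' (hshift n (by omega)) fun σ hσ => ?_
    rcases n.eq_zero_or_pos with rfl | hn
    · simp [hR0] at hσ
    · exact hbethe n hn (by omega) σ hσ

theorem hamiltonian_roots_eq_sum_range [IsAlgClosed K] {η : K} (hη : η ≠ 0) (hη2 : η ^ 2 ≠ 1)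
    (N : ℕ) (Q : ℕ → K[X]) (hQ0 : Q 0 = 1) (hmonic : ∀ j, 1 ≤ j → j ≤ N → (Q j).Monic)
    (hdeg : ∀ j, 1 ≤ j → j ≤ N → (Q j).natDegree = j)
    (hsimple : ∀ j, 1 ≤ j → j ≤ N → (Q j).roots.Nodup)
    (hnonzeroroot : ∀ j, 1 ≤ j → j ≤ N → (Q j).eval 0 ≠ 0)
    (hgen : ∀ j, 1 ≤ j → j ≤ N → ∀ x y : K,
      (Q j).eval x = 0 → (Q (j - 1)).eval y = 0 → x ≠ η * y)
    (τ : ℕ → K)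
    (hbethe : ∀ j, 1 ≤ j → j + 1 ≤ N → ∀ x : K, (Q j).eval x = 0 →
      τ (j - 1) * (Q (j - 1)).eval (η * x) * (Q j).eval ((η ^ 2)⁻¹ * x) * (Q (j + 1)).eval (η * x) +
        τ j * (Q (j - 1)).eval (η⁻¹ * x) * (Q j).eval (η ^ 2 * x) *
          (Q (j + 1)).eval (η⁻¹ * x) = 0) :
    hamiltonian η (τ (N - 1)) (Q N).roots.toFinset (Q (N - 1)) = ∑ i ∈ range N, τ i := by
  set R : ℕ → Finset K := fun j => (Q j).roots.toFinset
  have hR0 : R 0 = ∅ := by simp [R, hQ0]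
  have hQR : ∀ j ≤ N, Q j = nodal (R j) id := by
    intro j hj
    rcases j.eq_zero_or_pos with rfl | hj0
    · rw [hR0, nodal_empty, hQ0]
    · exact (nodal_roots_toFinset (hmonic j hj0 hj)
        (splits_iff_card_roots.mp (IsAlgClosed.splits _)) (hsimple j hj0 hj)).symm
  have hroot : ∀ j ≤ N, ∀ σ ∈ R j, (Q j).eval σ = 0 := fun j hj σ hσ => by
    rw [hQR j hj]
    exact eval_nodal_at_node (v := id) hσ
  rw [hQR (N - 1) (Nat.sub_le N 1)]
  refine hamiltonian_eq_sum_range hη hη2 R τ N (fun j hj => ?_) (fun j hj => ?_)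
    (fun j hj σ hσ => ?_) (fun j h1 h2 σ hσ => ?_)
  · rcases j.eq_zero_or_pos with rfl | hj0
    · simp [hR0]
    · simpa only [hQR j hj, natDegree_nodal] using hdeg j hj0 hj
  · rcases j.eq_zero_or_pos with rfl | hj0
    · simp [hR0]
    · exact fun h => hnonzeroroot j hj0 hj (hroot j hj 0 h)
  · rcases j.eq_zero_or_pos with rfl | hj0
    · simp [hR0] at hσ
    · rw [← hQR (j - 1) (by omega)]
      exact fun h => hgen j hj0 hj σ _ (hroot j hj σ hσ) h (by rw [mul_inv_cancel_left₀ hη])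
  · rw [← hQR (j - 1) (by omega), ← hQR j (by omega), ← hQR (j + 1) h2]
    exact hbethe j h1 h2 σ (hroot j (by omega) σ hσ)

theorem hamiltonian_image {ι : Type*} [DecidableEq ι] {μ : ι → K} (hμ : Function.Injective μ)
    (η τ : K) (s : Finset ι) (q : K[X]) :
    hamiltonian η τ (s.image μ) q = ∑ α ∈ s,
      (∏ β ∈ s.erase α, (η⁻¹ * μ α - η * μ β) / (μ α - μ β)) *
        (τ * η ^ ((1 : ℤ) - (#s : ℤ)) * (q.eval (η * μ α) / q.eval (η⁻¹ * μ α))) := by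
  rw [hamiltonian, sum_image fun _ _ _ _ h => hμ h, card_image_of_injective _ hμ]
  refine sum_congr rfl fun α _ => ?_
  rw [weight, ← image_erase hμ, prod_image fun _ _ _ _ h => hμ h]

end RuijsenaarsSchneider

/-- **Magnetic-frame r = 1 trigonometric Ruijsenaars–Schneider relation for
`T[U(N)]`**: if the polynomials `Q₀ = 1, Q₁, …, Q_N` (with `Q_j` monic of degree
`j`, with simple nonzero roots, and `μ₁,…,μ_N` the roots of `Q_N`) satisfy the
Bethe equations at every root of every intermediate `Q_j`, then
`Σ_α (∏_{β≠α} (η⁻¹μ_α − ημ_β)/(μ_α − μ_β)) · τ_N η^{1−N} Q_{N-1}(ημ_α)/Q_{N-1}(η⁻¹μ_α)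
 = τ₁ + ⋯ + τ_N`. -/
theorem tun_magnetic_frame_first_hamiltonian (N : ℕ) (hN : 1 ≤ N) (η : ℂ)
    (hη : η ≠ 0) (hηroot : ∀ n : ℕ, 1 ≤ n → η ^ n ≠ 1)
    (Q : ℕ → Polynomial ℂ) (hQ0 : Q 0 = 1)
    (hmonic : ∀ j : ℕ, 1 ≤ j → j ≤ N → (Q j).Monic)
    (hdeg : ∀ j : ℕ, 1 ≤ j → j ≤ N → (Q j).natDegree = j)
    (hsimple : ∀ j : ℕ, 1 ≤ j → j ≤ N → (Q j).roots.Nodup)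
    (hnonzeroroot : ∀ j : ℕ, 1 ≤ j → j ≤ N → (Q j).eval 0 ≠ 0)
    (μ : Fin N → ℂ)
    (hroots : Q N = ∏ α : Fin N, (Polynomial.X - Polynomial.C (μ α)))
    (hgen : ∀ j : ℕ, 1 ≤ j → j ≤ N → ∀ x y : ℂ,
      (Q j).eval x = 0 → (Q (j - 1)).eval y = 0 → x ≠ η * y ∧ x ≠ η⁻¹ * y)
    (τ : Fin N → ℂ)
    (hbethe : ∀ j : ℕ, ∀ hj1 : 1 ≤ j, ∀ hjN : j + 1 ≤ N, ∀ x : ℂ, (Q j).eval x = 0 →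
      τ ⟨j - 1, by omega⟩ * (Q (j - 1)).eval (η * x) * (Q j).eval ((η ^ 2)⁻¹ * x) *
          (Q (j + 1)).eval (η * x) +
        τ ⟨j, by omega⟩ * (Q (j - 1)).eval (η⁻¹ * x) * (Q j).eval (η ^ 2 * x) *
          (Q (j + 1)).eval (η⁻¹ * x) = 0) :
    ∑ α : Fin N,
      (∏ β ∈ Finset.univ.erase α, (η⁻¹ * μ α - η * μ β) / (μ α - μ β)) *
        (τ ⟨N - 1, by omega⟩ * η ^ ((1 : ℤ) - (N : ℤ)) *
          ((Q (N - 1)).eval (η * μ α) / (Q (N - 1)).eval (η⁻¹ * μ α))) =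
      ∑ i : Fin N, τ i := by
  have hη2 : η ^ 2 ≠ 1 := hηroot 2 (by norm_num)
  set τ' : ℕ → ℂ := Function.extend Fin.val τ 0
  have hτ' : ∀ i (hi : i < N), τ' i = τ ⟨i, hi⟩ := fun i hi =>
    Fin.val_injective.extend_apply τ 0 ⟨i, hi⟩
  have hrootsN : (Q N).roots = univ.val.map μ := by
    rw [hroots, prod_eq_multiset_prod, ← roots_multiset_prod_X_sub_C (univ.val.map μ),
      Multiset.map_map]
    rfl
  have hμ : Function.Injective μ := by
    have := hsimple N hN le_rfl
    rw [hrootsN, nodup_map_iff_injOn, coe_univ] at this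
    exact Set.injOn_univ.mp this
  have key := RuijsenaarsSchneider.hamiltonian_roots_eq_sum_range hη hη2 N Q hQ0 hmonic hdeg
    hsimple hnonzeroroot (fun j h1 h2 x y hx hy => (hgen j h1 h2 x y hx hy).1) τ'
    fun j h1 h2 x hx => by
      rw [hτ' (j - 1) (by omega), hτ' j (by omega)]
      exact hbethe j h1 h2 x hx
  rw [show (Q N).roots.toFinset = univ.image μ by rw [hrootsN]; rfl,
    RuijsenaarsSchneider.hamiltonian_image hμ, card_univ, Fintype.card_fin, hτ' (N - 1) (by omega),
    ← Fin.sum_univ_eq_sum_range] at key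
  exact key.trans (sum_congr rfl fun i _ => hτ' i i.2)
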